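/- Every complete split graph G satisfies μ(G) = μt(G). -/

import Mathlib

open SimpleGraph

/-- Vertices `x` and `y` are `X`-visible in `G`: some shortest `x,y`-path has
no internal vertex in `X`. -/
def Visible {V : Type*} (G : SimpleGraph V) (X : Set V) (x y : V) : Prop :=
  ∃ p : G.Walk x y, p.length = G.dist x y ∧ ∀ v ∈ p.support, v ∈ X → v = x ∨ v = y

/-- `X` is a mutual-visibility set of `G`: every two vertices of `X` are `X`-visible. -/
def IsMVSet {V : Type*} (G : SimpleGraph V) (X : Set V) : Prop :=
  ∀ x ∈ X, ∀ y ∈ X, Visible G X x y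

/-- `X` is a total mutual-visibility set of `G`: every two vertices of `G` are
`X`-visible. -/
def IsTMVSet {V : Type*} (G : SimpleGraph V) (X : Set V) : Prop :=
  ∀ x y : V, Visible G X x y

/-- The mutual-visibility number of `G`: the maximum cardinality of a
mutual-visibility set. -/
noncomputable def mu {V : Type*} (G : SimpleGraph V) : ℕ :=
  sSup {n | ∃ X : Set V, IsMVSet G X ∧ X.ncard = n}

/-- The total mutual-visibility number of `G`: the maximum cardinality of a total
mutual-visibility set. -/
noncomputable def muT {V : Type*} (G : SimpleGraph V) : ℕ :=
  sSup {n | ∃ X : Set V, IsTMVSet G X ∧ X.ncard = n}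

/-- A feasible total mutual-visibility set: a total mutual-visibility set `S` such that
any two adjacent vertices of `S` have a common neighbor outside `S`. -/
def IsFeasibleTMVSet {V : Type*} (G : SimpleGraph V) (S : Set V) : Prop :=
  IsTMVSet G S ∧ ∀ x ∈ S, ∀ y ∈ S, G.Adj x y → ∃ z ∉ S, G.Adj x z ∧ G.Adj y z

/-- The strong product of two simple graphs. -/
def strongProd {α β : Type*} (G : SimpleGraph α) (H : SimpleGraph β) :
    SimpleGraph (α × β) where
  Adj x y := (G.Adj x.1 y.1 ∧ x.2 = y.2) ∨ (x.1 = y.1 ∧ H.Adj x.2 y.2) ∨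
    (G.Adj x.1 y.1 ∧ H.Adj x.2 y.2)
  symm := by
    constructor
    rintro ⟨a, b⟩ ⟨c, d⟩ (⟨h1, h2⟩ | ⟨h1, h2⟩ | ⟨h1, h2⟩)
    · exact Or.inl ⟨h1.symm, h2.symm⟩
    · exact Or.inr (Or.inl ⟨h1.symm, h2.symm⟩)
    · exact Or.inr (Or.inr ⟨h1.symm, h2.symm⟩)
  loopless := by
    constructor
    rintro ⟨a, b⟩ (⟨h, _⟩ | ⟨_, h⟩ | ⟨h, _⟩)
    · exact G.loopless.irrefl a h
    · exact H.loopless.irrefl b h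
    · exact G.loopless.irrefl a h

/-- The iterated (associative) strong product of a finite family of graphs:
two tuples are adjacent iff they are distinct and agree or are adjacent in every
coordinate. -/
def strongProdPi {k : ℕ} {V : Fin k → Type*} (G : ∀ i, SimpleGraph (V i)) :
    SimpleGraph (∀ i, V i) where
  Adj x y := x ≠ y ∧ ∀ i, x i = y i ∨ (G i).Adj (x i) (y i)
  symm := by
    constructor
    rintro x y ⟨hne, h⟩
    exact ⟨hne.symm, fun i => (h i).imp Eq.symm fun hh => (G i).symm.symm _ _ hh⟩
  loopless := ⟨fun x h => h.1 rfl⟩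

/-- A universal vertex: adjacent to all other vertices. -/
def IsUniversal {V : Type*} (G : SimpleGraph V) (v : V) : Prop :=
  ∀ u : V, u ≠ v → G.Adj v u

/-- A cut vertex: its removal disconnects the graph. -/
def IsCutVertex {V : Type*} (G : SimpleGraph V) (v : V) : Prop :=
  ¬ (G.induce ({v}ᶜ : Set V)).Preconnected

/-- An induced path: a path with no chords between its vertices. -/
def IsInducedPath {V : Type*} (G : SimpleGraph V) {u v : V} (p : G.Walk u v) : Prop :=
  p.IsPath ∧ ∀ a b : V, a ∈ p.support → b ∈ p.support → G.Adj a b → s(a, b) ∈ p.edges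

/-- A block graph: a connected graph in which every pair of vertices is joined
by a unique induced path. -/
def IsBlockGraph {V : Type*} (G : SimpleGraph V) : Prop :=
  G.Connected ∧ ∀ u v : V, ∃! p : G.Walk u v, IsInducedPath G p

/-- A convex set of vertices: every shortest path of `G` between two of its
vertices stays inside the set. -/
def IsConvexSet {V : Type*} (G : SimpleGraph V) (A : Set V) : Prop :=
  ∀ x ∈ A, ∀ y ∈ A, ∀ p : G.Walk x y, p.length = G.dist x y → ∀ v ∈ p.support, v ∈ A

/-- A cactus graph: a connected graph in which every edge lies in at most one cycle,
i.e. two cycles sharing an edge have the same edge set. -/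
def IsCactus {V : Type*} (G : SimpleGraph V) : Prop :=
  G.Connected ∧ ∀ (v : V) (p q : G.Walk v v), p.IsCycle → q.IsCycle →
    ∀ e, e ∈ p.edges → e ∈ q.edges → ∀ e', e' ∈ p.edges ↔ e' ∈ q.edges

/-- A cograph: obtained from a single vertex by repeatedly adding twins, i.e. there is
an enumeration of the vertices in which every vertex except the first is, at the
moment of its addition, a (true or false) twin of some earlier vertex in the induced
subgraph on the vertices added so far. -/
def IsCograph {V : Type*} (G : SimpleGraph V) : Prop :=
  ∃ l : List V, l.Nodup ∧ (∀ v : V, v ∈ l) ∧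
    ∀ i : Fin l.length, (i : ℕ) ≠ 0 →
      ∃ j : Fin l.length, (j : ℕ) < (i : ℕ) ∧
        ∀ z ∈ l.take ((i : ℕ) + 1), z ≠ l.get i → z ≠ l.get j →
          (G.Adj (l.get i) z ↔ G.Adj (l.get j) z)

/-- An enabling vertex: a vertex `v` adjacent to every vertex `u` of `G - v` whose
degree in `G - v` is less than `n(G) - 2`. -/
def IsEnabling {V : Type*} [Fintype V] (G : SimpleGraph V) (v : V) : Prop :=
  ∀ u : V, u ≠ v → (G.neighborSet u \ {v}).ncard < Fintype.card V - 2 → G.Adj v u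

/-! If the independent side `A` has at most one vertex, `G` is complete and `V` itself is a
total mutual-visibility set. Otherwise two vertices of `A` lie at distance 2 and can see each
other only through a clique vertex, so no mutual-visibility set is all of `V`; on the other
hand, for a clique vertex `c`, every non-adjacent pair is joined through `c`, so `{c}ᶜ` is a
total mutual-visibility set. -/

namespace SimpleGraph

variable {V : Type*} {G : SimpleGraph V} {X : Set V} {x y m : V}

lemma visible_refl (X : Set V) (x : V) : Visible G X x x :=
  ⟨.nil, by simp, by simp⟩

lemma visible_of_adj (X : Set V) (hxy : G.Adj x y) : Visible G X x y :=
  ⟨hxy.toWalk, by simp [dist_eq_one_iff_adj.mpr hxy], by simp⟩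

lemma visible_of_adj_of_adj (hxm : G.Adj x m) (hmy : G.Adj m y) (hxy : G.dist x y = 2)
    (hm : m ∉ X) : Visible G X x y := by
  refine ⟨.cons hxm (.cons hmy .nil), by simp [hxy], ?_⟩
  simp only [Walk.support_cons, Walk.support_nil, List.mem_cons, List.not_mem_nil, or_false]
  rintro v (rfl | rfl | rfl) hv
  exacts [.inl rfl, absurd hv hm, .inr rfl]

lemma Visible.exists_notMem_of_dist_eq_two (hv : Visible G X x y) (hxy : G.dist x y = 2) :
    ∃ m, m ∉ X := by
  obtain ⟨p, hlen, hint⟩ := hv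
  rw [hxy] at hlen
  obtain _ | @⟨_, m, _, h₁, _ | ⟨h₂, _ | ⟨_, _⟩⟩⟩ := p <;> simp only [Walk.length_cons,
    Walk.length_nil] at hlen <;> try omega
  refine ⟨m, fun hm => ?_⟩
  rcases hint _ (by simp) hm with rfl | rfl
  exacts [h₁.ne rfl, h₂.ne rfl]

lemma IsTMVSet.isMVSet (hX : IsTMVSet G X) : IsMVSet G X :=
  fun x _ y _ => hX x y

lemma isTMVSet_top (X : Set V) : IsTMVSet (⊤ : SimpleGraph V) X := by
  intro x y
  by_cases hxy : x = y
  exacts [hxy ▸ visible_refl X x, visible_of_adj X hxy]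

lemma mu_eq_muT_of_isTMVSet_of_forall_ncard_le {X₀ : Set V} (hX₀ : IsTMVSet G X₀)
    (hmax : ∀ X, IsMVSet G X → X.ncard ≤ X₀.ncard) : mu G = muT G := by
  have hmu : IsGreatest {n | ∃ X, IsMVSet G X ∧ X.ncard = n} X₀.ncard :=
    ⟨⟨X₀, hX₀.isMVSet, rfl⟩, by rintro _ ⟨X, hX, rfl⟩; exact hmax X hX⟩
  have hmuT : IsGreatest {n | ∃ X, IsTMVSet G X ∧ X.ncard = n} X₀.ncard :=
    ⟨⟨X₀, hX₀, rfl⟩, by rintro _ ⟨X, hX, rfl⟩; exact hmax X hX.isMVSet⟩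
  rw [mu, muT, hmu.csSup_eq, hmuT.csSup_eq]

end SimpleGraph

lemma Set.ncard_le_ncard_compl_singleton {α : Type*} [Finite α] {s : Set α} (hs : s ≠ univ)
    (a : α) : s.ncard ≤ ({a}ᶜ : Set α).ncard := by
  have := ncard_lt_ncard (ssubset_univ_iff.mpr hs)
  rw [ncard_univ] at this
  rw [ncard_compl, ncard_singleton]
  omega

def IsCompleteSplit {V : Type*} (G : SimpleGraph V) (A : Set V) : Prop :=
  ∀ u v : V, G.Adj u v ↔ u ≠ v ∧ (u ∉ A ∨ v ∉ A)

namespace IsCompleteSplit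

variable {V : Type*} {G : SimpleGraph V} {A : Set V} {a b c : V}

lemma eq_top_of_subsingleton (hG : IsCompleteSplit G A) (hA : A.Subsingleton) : G = ⊤ := by
  ext u v
  rw [hG, SimpleGraph.top_adj, and_iff_left_iff_imp]
  intro huv
  by_contra! h
  exact huv (hA h.1 h.2)

lemma exists_notMem (hG : IsCompleteSplit G A) (hconn : G.Connected) (hA : A.Nontrivial) :
    ∃ c, c ∉ A := by
  obtain ⟨a, ha, b, -, hab⟩ := hA
  have : Nontrivial V := ⟨a, b, hab⟩
  obtain ⟨c, hac⟩ := hconn.preconnected.exists_adj_of_nontrivial a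
  exact ⟨c, ((hG a c).mp hac).2.resolve_left (not_not.mpr ha)⟩

lemma dist_eq_two (hG : IsCompleteSplit G A) (ha : a ∈ A) (hb : b ∈ A) (hab : a ≠ b)
    (hc : c ∉ A) : G.dist a b = 2 := by
  have hac : G.Adj a c := (hG a c).mpr ⟨fun h => hc (h ▸ ha), .inr hc⟩
  have hcb : G.Adj c b := (hG c b).mpr ⟨fun h => hc (h ▸ hb), .inl hc⟩
  have hle : G.dist a b ≤ 2 := by simpa using G.dist_le (.cons hac (.cons hcb .nil))
  have hne0 : G.dist a b ≠ 0 := (hac.reachable.trans hcb.reachable).pos_dist_of_ne hab |>.ne'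
  have hne1 : G.dist a b ≠ 1 := fun h => by
    simpa [ha, hb] using (hG a b).mp (SimpleGraph.dist_eq_one_iff_adj.mp h)
  omega

lemma isTMVSet_compl_singleton (hG : IsCompleteSplit G A) (hc : c ∉ A) :
    IsTMVSet G {c}ᶜ := by
  intro x y
  by_cases hxy : x = y
  · exact hxy ▸ SimpleGraph.visible_refl _ x
  by_cases hadj : G.Adj x y
  · exact SimpleGraph.visible_of_adj _ hadj
  rw [hG, not_and, not_or, not_not, not_not] at hadj
  obtain ⟨hx, hy⟩ := hadj hxy
  exact SimpleGraph.visible_of_adj_of_adj ((hG x c).mpr ⟨fun h => hc (h ▸ hx), .inr hc⟩)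
    ((hG c y).mpr ⟨fun h => hc (h ▸ hy), .inl hc⟩) (hG.dist_eq_two hx hy hxy hc) (by simp)

lemma ne_univ_of_isMVSet (hG : IsCompleteSplit G A) (hA : A.Nontrivial) (hc : c ∉ A)
    {X : Set V} (hX : IsMVSet G X) : X ≠ Set.univ := by
  obtain ⟨a, ha, b, hb, hab⟩ := hA
  rintro rfl
  obtain ⟨m, hm⟩ := (hX a trivial b trivial).exists_notMem_of_dist_eq_two
    (hG.dist_eq_two ha hb hab hc)
  exact hm trivial

end IsCompleteSplit

theorem stmt_6 {V : Type*} [Fintype V] (G : SimpleGraph V) (hG : G.Connected)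
    (A : Set V) (h : ∀ u v : V, G.Adj u v ↔ u ≠ v ∧ (u ∉ A ∨ v ∉ A)) :
    mu G = muT G := by
  have hsplit : IsCompleteSplit G A := h
  rcases A.subsingleton_or_nontrivial with hA | hA
  · obtain rfl := hsplit.eq_top_of_subsingleton hA
    exact SimpleGraph.mu_eq_muT_of_isTMVSet_of_forall_ncard_le (SimpleGraph.isTMVSet_top _)
      fun X _ => Set.ncard_le_ncard (Set.subset_univ X)
  · obtain ⟨c, hc⟩ := hsplit.exists_notMem hG hA
    exact SimpleGraph.mu_eq_muT_of_isTMVSet_of_forall_ncard_le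
      (hsplit.isTMVSet_compl_singleton hc)
      fun X hX => Set.ncard_le_ncard_compl_singleton (hsplit.ne_univ_of_isMVSet hA hc hX) c
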